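/- arXiv:1912.05277 — 2 statements merged into one kernel-verified Lean document; each statement's English description precedes it below -/
import Mathlib

section
/- Let E: ℝ → ℂ be measurable and bounded on compact subsets of (0,∞), and suppose E(x)/√x → 0 as x → ∞. Fix δ₁, δ₂ ∈ (0,1] and define E_{δ₁,δ₂}(X) := ∫_0^∞ ψ_{δ₁}(y/X) ∫_ℝ φ_{δ₂}(v) (E(2y+v) - E(y+v)) dv dy/y. Then E_{δ₁,δ₂}(X)/√X → 0 as X → ∞. (Equivalently, in contrapositive form: if E_{δ₁,δ₂}(X) = Ω(X^{1/2}) as X → ∞, i.e. E_{δ₁,δ₂}(X)/√X does not tend to 0, then E(X) = Ω(X^{1/2}).) -/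
open MeasureTheory Set

/-- `φ_δ(t) = δ⁻¹ φ(t/δ)`. -/
noncomputable def phiD (φ : ℝ → ℝ) (δ t : ℝ) : ℝ := δ⁻¹ * φ (t / δ)

/-- `ψ_δ(v) = δ⁻¹ ψ(v^{1/δ})`. -/
noncomputable def psiD (ψ : ℝ → ℝ) (δ v : ℝ) : ℝ := δ⁻¹ * ψ (v ^ (1 / δ))

/-- if `E` is measurable and bounded on compact subsets of `(0,∞)` and
`E(x)/√x → 0` as `x → ∞`, then the smoothed error
`E_{δ₁,δ₂}(X) = ∫_0^∞ ψ_{δ₁}(y/X) ∫_ℝ φ_{δ₂}(v)(E(2y+v)-E(y+v)) dv dy/y`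
satisfies `E_{δ₁,δ₂}(X)/√X → 0` as `X → ∞`. -/
theorem stmt_4 (φ ψ : ℝ → ℝ)
    (hφsm : ContDiff ℝ (⊤ : ℕ∞) φ) (hφ0 : ∀ t, 0 ≤ φ t)
    (hφsupp : Function.support φ ⊆ Set.Icc (-1) 1)
    (hφint : (∫ t : ℝ, φ t) = 1)
    (hψsm : ContDiff ℝ (⊤ : ℕ∞) ψ) (hψ0 : ∀ v, 0 ≤ ψ v)
    (hψsupp : Function.support ψ ⊆ Set.Ioc (1 / 2) 2)
    (hψint : (∫ v in Set.Ioi (0 : ℝ), ψ v / v) = 1)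
    (E : ℝ → ℂ) (hmeas : Measurable E)
    (hbdd : ∀ K : Set ℝ, K ⊆ Set.Ioi 0 → IsCompact K → ∃ M : ℝ, ∀ x ∈ K, ‖E x‖ ≤ M)
    (hE : Filter.Tendsto (fun x : ℝ => E x / (Real.sqrt x : ℂ)) Filter.atTop (nhds 0))
    (δ₁ δ₂ : ℝ) (hδ₁ : δ₁ ∈ Set.Ioc (0 : ℝ) 1) (hδ₂ : δ₂ ∈ Set.Ioc (0 : ℝ) 1) :
    Filter.Tendsto (fun X : ℝ =>
      (∫ y in Set.Ioi (0 : ℝ), ((psiD ψ δ₁ (y / X) : ℝ) : ℂ) *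
        (∫ v : ℝ, ((phiD φ δ₂ v : ℝ) : ℂ) * (E (2 * y + v) - E (y + v))) / (y : ℂ))
        / (Real.sqrt X : ℂ))
      Filter.atTop (nhds 0) := by
  obtain ⟨hδ₁0, hδ₁1⟩ := hδ₁
  obtain ⟨hδ₂0, hδ₂1⟩ := hδ₂
  -- uniform bounds on φ and ψ
  obtain ⟨Mφ, hMφ⟩ : ∃ M, ∀ t, |φ t| ≤ M := by
    have h1 : HasCompactSupport φ := HasCompactSupport.intro isCompact_Icc
      (fun x hx => by by_contra h; exact hx (hφsupp h))
    obtain ⟨C, hC⟩ := h1.exists_bound_of_continuous hφsm.continuous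
    exact ⟨C, fun t => by simpa [Real.norm_eq_abs] using hC t⟩
  obtain ⟨Mψ, hMψ⟩ : ∃ M, ∀ t, |ψ t| ≤ M := by
    have h1 : HasCompactSupport ψ := HasCompactSupport.intro (isCompact_Icc (a := (1:ℝ)/2) (b := 2))
      (fun x hx => by by_contra h; exact hx (Ioc_subset_Icc_self (hψsupp h)))
    obtain ⟨C, hC⟩ := h1.exists_bound_of_continuous hψsm.continuous
    exact ⟨C, fun t => by simpa [Real.norm_eq_abs] using hC t⟩
  have hMφ0 : 0 ≤ Mφ := le_trans (abs_nonneg _) (hMφ 0)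
  have hMψ0 : 0 ≤ Mψ := le_trans (abs_nonneg _) (hMψ 0)
  set C : ℝ := 12 * Real.sqrt 5 * δ₁⁻¹ * δ₂⁻¹ * Mψ * Mφ with hC_def
  have hC0 : 0 ≤ C := by
    have h5 : (0:ℝ) ≤ Real.sqrt 5 := Real.sqrt_nonneg 5
    positivity
  rw [NormedAddCommGroup.tendsto_nhds_zero]
  intro ε hε
  set ε' : ℝ := ε / (C + 1) with hε'_def
  have hε' : 0 < ε' := div_pos hε (by linarith)
  -- eventual bound on E
  obtain ⟨x₀, hx₀⟩ := Filter.eventually_atTop.mp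
    (NormedAddCommGroup.tendsto_nhds_zero.mp hE ε' hε')
  set x₁ : ℝ := max x₀ 1 with hx₁_def
  have hEb : ∀ t : ℝ, x₁ ≤ t → ‖E t‖ ≤ ε' * Real.sqrt t := by
    intro t ht
    have ht1 : (1:ℝ) ≤ t := le_trans (le_max_right _ _) ht
    have hst : 0 < Real.sqrt t := Real.sqrt_pos.mpr (by linarith)
    have h1 : ‖E t / (Real.sqrt t : ℂ)‖ < ε' := hx₀ t (le_trans (le_max_left _ _) ht)
    have h2 : ‖E t / (Real.sqrt t : ℂ)‖ = ‖E t‖ / Real.sqrt t := by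
      rw [norm_div, Complex.norm_real, Real.norm_eq_abs, abs_of_pos hst]
    rw [h2, div_lt_iff₀ hst] at h1
    linarith
  filter_upwards [Filter.eventually_ge_atTop (max (2 * x₁ + 2) 2)] with X hX
  have hX2 : (2:ℝ) ≤ X := le_trans (le_max_right _ _) hX
  have hXx : 2 * x₁ + 2 ≤ X := le_trans (le_max_left _ _) hX
  have hX0 : (0:ℝ) < X := by linarith
  have hsX : 0 < Real.sqrt X := Real.sqrt_pos.mpr hX0
  -- the bound on the E-difference on the relevant range
  have hdiff : ∀ y v : ℝ, X / 2 < y → y ≤ 2 * X → v ∈ Icc (-1:ℝ) 1 →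
      ‖E (2 * y + v) - E (y + v)‖ ≤ 2 * ε' * Real.sqrt (5 * X) := by
    intro y v hy1 hy2 hv
    obtain ⟨hv1, hv2⟩ := hv
    have hx₁1 : (1:ℝ) ≤ x₁ := le_max_right _ _
    have key : ∀ t : ℝ, X / 2 - 1 ≤ t → t ≤ 5 * X → ‖E t‖ ≤ ε' * Real.sqrt (5 * X) := by
      intro t h1 h2
      have ht : x₁ ≤ t := by linarith
      refine le_trans (hEb t ht) ?_
      have : Real.sqrt t ≤ Real.sqrt (5 * X) := Real.sqrt_le_sqrt h2
      nlinarith [hε'.le]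
    have h1 : ‖E (2 * y + v)‖ ≤ ε' * Real.sqrt (5 * X) := key _ (by linarith) (by linarith)
    have h2 : ‖E (y + v)‖ ≤ ε' * Real.sqrt (5 * X) := key _ (by linarith) (by linarith)
    calc ‖E (2 * y + v) - E (y + v)‖ ≤ ‖E (2 * y + v)‖ + ‖E (y + v)‖ := norm_sub_le _ _
    _ ≤ 2 * ε' * Real.sqrt (5 * X) := by linarith
  -- inner integral bound
  set IB : ℝ := 4 * δ₂⁻¹ * Mφ * ε' * Real.sqrt (5 * X) with hIB_def
  have hIB0 : 0 ≤ IB := by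
    have : (0:ℝ) ≤ Real.sqrt (5 * X) := Real.sqrt_nonneg _
    positivity
  have hinner : ∀ y : ℝ, X / 2 < y → y ≤ 2 * X →
      ‖∫ v : ℝ, ((phiD φ δ₂ v : ℝ) : ℂ) * (E (2 * y + v) - E (y + v))‖ ≤ IB := by
    intro y hy1 hy2
    have hg : Integrable ((Icc (-1:ℝ) 1).indicator
        (fun _ => δ₂⁻¹ * Mφ * (2 * ε' * Real.sqrt (5 * X)))) := by
      rw [integrable_indicator_iff measurableSet_Icc]
      exact integrableOn_const measure_Icc_lt_top.ne
    have hb : ∀ v : ℝ, ‖((phiD φ δ₂ v : ℝ) : ℂ) * (E (2 * y + v) - E (y + v))‖ ≤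
        (Icc (-1:ℝ) 1).indicator (fun _ => δ₂⁻¹ * Mφ * (2 * ε' * Real.sqrt (5 * X))) v := by
      intro v
      by_cases hv : v ∈ Icc (-1:ℝ) 1
      · rw [indicator_of_mem hv]
        rw [norm_mul, Complex.norm_real, Real.norm_eq_abs]
        have h1 : |phiD φ δ₂ v| ≤ δ₂⁻¹ * Mφ := by
          rw [phiD, abs_mul, abs_of_pos (inv_pos.mpr hδ₂0)]
          exact mul_le_mul_of_nonneg_left (hMφ _) (inv_nonneg.mpr hδ₂0.le)
        have h2 := hdiff y v hy1 hy2 hv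
        have h3 : (0:ℝ) ≤ 2 * ε' * Real.sqrt (5 * X) := by positivity
        exact mul_le_mul h1 h2 (norm_nonneg _) (by positivity)
      · rw [indicator_of_notMem hv]
        have hφv : φ (v / δ₂) = 0 := by
          by_contra h
          have hm := hφsupp h
          obtain ⟨ha, hb'⟩ := hm
          simp only [mem_Icc, not_and_or, not_le] at hv
          rcases hv with hv | hv
          · have : v / δ₂ < -1 := by
              rw [div_lt_iff₀ hδ₂0]; nlinarith
            linarith
          · have : 1 < v / δ₂ := by
              rw [lt_div_iff₀ hδ₂0]; nlinarith
            linarith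
        simp [phiD, hφv]
    calc ‖∫ v : ℝ, ((phiD φ δ₂ v : ℝ) : ℂ) * (E (2 * y + v) - E (y + v))‖ ≤
        ∫ v : ℝ, (Icc (-1:ℝ) 1).indicator
          (fun _ => δ₂⁻¹ * Mφ * (2 * ε' * Real.sqrt (5 * X))) v :=
        norm_integral_le_of_norm_le hg (Filter.Eventually.of_forall hb)
    _ = (volume (Icc (-1:ℝ) 1)).toReal • (δ₂⁻¹ * Mφ * (2 * ε' * Real.sqrt (5 * X))) :=
        integral_indicator_const _ measurableSet_Icc
    _ = IB := by
        rw [Real.volume_Icc, show (1:ℝ) - (-1) = 2 by norm_num,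
          ENNReal.toReal_ofReal (by norm_num : (0:ℝ) ≤ 2), smul_eq_mul, hIB_def]
        ring
  -- outer integral bound
  set K : ℝ := δ₁⁻¹ * Mψ * IB * (2 / X) with hK_def
  have houter : ‖∫ y in Set.Ioi (0 : ℝ), ((psiD ψ δ₁ (y / X) : ℝ) : ℂ) *
      (∫ v : ℝ, ((phiD φ δ₂ v : ℝ) : ℂ) * (E (2 * y + v) - E (y + v))) / (y : ℂ)‖ ≤
      3 * δ₁⁻¹ * Mψ * IB := by
    have hg : Integrable ((Ioc (X/2) (2*X)).indicator (fun _ => K))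
        (volume.restrict (Ioi (0:ℝ))) := by
      rw [integrable_indicator_iff measurableSet_Ioc]
      have hlt : (volume.restrict (Ioi (0:ℝ))) (Ioc (X/2) (2*X)) < ⊤ := by
        rw [Measure.restrict_apply measurableSet_Ioc]
        exact lt_of_le_of_lt (measure_mono inter_subset_left) measure_Ioc_lt_top
      exact integrableOn_const hlt.ne
    have hb : ∀ y ∈ Ioi (0:ℝ), ‖((psiD ψ δ₁ (y / X) : ℝ) : ℂ) *
        (∫ v : ℝ, ((phiD φ δ₂ v : ℝ) : ℂ) * (E (2 * y + v) - E (y + v))) / (y : ℂ)‖ ≤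
        (Ioc (X/2) (2*X)).indicator (fun _ => K) y := by
      intro y hy
      have hy0 : (0:ℝ) < y := hy
      by_cases hmem : y ∈ Ioc (X/2) (2*X)
      · rw [indicator_of_mem hmem]
        obtain ⟨hy1, hy2⟩ := hmem
        rw [norm_div, norm_mul, Complex.norm_real, Complex.norm_real,
          Real.norm_eq_abs, Real.norm_eq_abs, abs_of_pos hy0]
        have h1 : |psiD ψ δ₁ (y / X)| ≤ δ₁⁻¹ * Mψ := by
          rw [psiD, abs_mul, abs_of_pos (inv_pos.mpr hδ₁0)]
          exact mul_le_mul_of_nonneg_left (hMψ _) (inv_nonneg.mpr hδ₁0.le)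
        have h2 := hinner y hy1 hy2
        have h3 : |psiD ψ δ₁ (y / X)| * ‖∫ v : ℝ, ((phiD φ δ₂ v : ℝ) : ℂ) *
            (E (2 * y + v) - E (y + v))‖ ≤ δ₁⁻¹ * Mψ * IB :=
          mul_le_mul h1 h2 (norm_nonneg _) (by positivity)
        have h4 : (1:ℝ) / y ≤ 2 / X := by
          rw [div_le_div_iff₀ hy0 hX0]; linarith
        calc |psiD ψ δ₁ (y / X)| * ‖∫ v : ℝ, ((phiD φ δ₂ v : ℝ) : ℂ) *
            (E (2 * y + v) - E (y + v))‖ / y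
            = |psiD ψ δ₁ (y / X)| * ‖∫ v : ℝ, ((phiD φ δ₂ v : ℝ) : ℂ) *
            (E (2 * y + v) - E (y + v))‖ * (1 / y) := by ring
        _ ≤ δ₁⁻¹ * Mψ * IB * (2 / X) := by
            apply mul_le_mul h3 h4 (by positivity)
            positivity
        _ = K := rfl
      · rw [indicator_of_notMem hmem]
        have hψv : ψ ((y / X) ^ (1 / δ₁)) = 0 := by
          by_contra h
          have hm := hψsupp h
          obtain ⟨ha, hb'⟩ := hm
          have hyX : 0 < y / X := div_pos hy0 hX0
          have heq : ((y / X) ^ (1 / δ₁) : ℝ) ^ (δ₁ : ℝ) = y / X := by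
            rw [← Real.rpow_mul hyX.le, one_div, inv_mul_cancel₀ (ne_of_gt hδ₁0),
              Real.rpow_one]
          apply hmem
          set b : ℝ := (y / X) ^ (1 / δ₁) with hb_def
          have hb0 : (0:ℝ) < b := lt_trans (by norm_num) ha
          constructor
          · -- X/2 < y, i.e. 1/2 < y/X
            have h1 : ((1:ℝ)/2) ^ (δ₁ : ℝ) < b ^ (δ₁ : ℝ) :=
              Real.rpow_lt_rpow (by norm_num) ha hδ₁0
            have h2 : ((1:ℝ)/2) ^ (1:ℝ) ≤ ((1:ℝ)/2) ^ (δ₁ : ℝ) :=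
              Real.rpow_le_rpow_of_exponent_ge (by norm_num) (by norm_num) hδ₁1
            rw [Real.rpow_one] at h2
            rw [heq] at h1
            have : (1:ℝ)/2 < y / X := lt_of_le_of_lt h2 h1
            rw [div_lt_div_iff₀ (by norm_num) hX0] at this
            linarith
          · -- y ≤ 2X, i.e. y/X ≤ 2
            have h1 : b ^ (δ₁ : ℝ) ≤ (2:ℝ) ^ (δ₁ : ℝ) :=
              Real.rpow_le_rpow hb0.le hb' hδ₁0.le
            have h2 : (2:ℝ) ^ (δ₁ : ℝ) ≤ (2:ℝ) ^ (1:ℝ) :=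
              Real.rpow_le_rpow_of_exponent_le (by norm_num) hδ₁1
            rw [Real.rpow_one] at h2
            rw [heq] at h1
            have : y / X ≤ 2 := le_trans h1 h2
            rw [div_le_iff₀ hX0] at this
            linarith
        have hz : psiD ψ δ₁ (y / X) = 0 := by rw [psiD, hψv, mul_zero]
        simp [hz]
    calc ‖∫ y in Set.Ioi (0 : ℝ), ((psiD ψ δ₁ (y / X) : ℝ) : ℂ) *
        (∫ v : ℝ, ((phiD φ δ₂ v : ℝ) : ℂ) * (E (2 * y + v) - E (y + v))) / (y : ℂ)‖ ≤
        ∫ y in Set.Ioi (0:ℝ), (Ioc (X/2) (2*X)).indicator (fun _ => K) y :=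
        norm_integral_le_of_norm_le hg
          ((ae_restrict_iff' measurableSet_Ioi).mpr (Filter.Eventually.of_forall hb))
    _ = (volume.restrict (Ioi (0:ℝ)) (Ioc (X/2) (2*X))).toReal • K :=
        integral_indicator_const _ measurableSet_Ioc
    _ = 3 * δ₁⁻¹ * Mψ * IB := by
        rw [Measure.restrict_apply measurableSet_Ioc]
        have hsub : Ioc (X/2) (2*X) ∩ Ioi (0:ℝ) = Ioc (X/2) (2*X) := by
          apply inter_eq_self_of_subset_left
          intro z hz
          exact lt_trans (by linarith : (0:ℝ) < X/2) hz.1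
        rw [hsub, Real.volume_Ioc]
        rw [ENNReal.toReal_ofReal (by linarith : (0:ℝ) ≤ 2*X - X/2)]
        rw [hK_def]
        field_simp
        rw [smul_eq_mul]
        field_simp
        ring
  -- conclude
  rw [norm_div, Complex.norm_real, Real.norm_eq_abs, abs_of_pos hsX]
  rw [div_lt_iff₀ hsX]
  have h5 : Real.sqrt (5 * X) = Real.sqrt 5 * Real.sqrt X := Real.sqrt_mul (by norm_num) X
  have hfinal : 3 * δ₁⁻¹ * Mψ * IB = C * ε' * Real.sqrt X := by
    rw [hIB_def, h5, hC_def]; ring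
  refine lt_of_le_of_lt (houter.trans_eq hfinal) ?_
  have hCε : C * ε' < ε := by
    have h1 : C * ε' = ε * (C / (C + 1)) := by rw [hε'_def]; ring
    have h2 : C / (C + 1) < 1 := (div_lt_one (by linarith)).mpr (by linarith)
    calc C * ε' = ε * (C / (C + 1)) := h1
    _ < ε * 1 := mul_lt_mul_of_pos_left h2 hε
    _ = ε := mul_one ε
  calc C * ε' * Real.sqrt X < ε * Real.sqrt X :=
    mul_lt_mul_of_pos_right hCε hsX
end

section
/- Let Z > 1 and α ∈ (-1,1), and define f(y) := (1+α) log y + (1-α) log(1-y) - (1+α) log(Z-y) for y ∈ (0,1). Then the point y₀ := Z(1+α)/(Z + √(Z² - Z(1-α²))) lies in the open interval (0,1), satisfies f'(y₀) = 0, and is the unique zero of f' in (0,1). -/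
/-!
Clearing the positive denominator `y (1 - y) (Z - y)` turns `f'(y) = 0` into the quadratic
equation `q(y) = (1 - α) y² - 2 Z y + Z (1 + α) = 0`, whose smaller root is `y₀`
(rationalise `(Z - √D) / (1 - α)` with `D = Z² - Z (1 - α²)`). Since `q` opens upwards and
`q(1) = (1 - α)(1 - Z) < 0`, the point `1` lies strictly between the two roots of `q`,
so `y₀` is its only root in `(0, 1)`.
-/

open Real Set

theorem eq_of_quadratic_eq_zero_of_lt {a b c t y y' : ℝ} (ha : 0 < a)
    (ht : a * t ^ 2 + b * t + c < 0) (hy : a * y ^ 2 + b * y + c = 0)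
    (hy' : a * y' ^ 2 + b * y' + c = 0) (hyt : y < t) (hy't : y' < t) : y = y' := by
  by_contra hne
  have hb : b = -a * (y + y') := by
    refine mul_left_cancel₀ (sub_ne_zero.mpr hne) ?_
    linear_combination hy - hy'
  have hc : c = a * y * y' := by linear_combination hy - y * hb
  have hfactor : a * t ^ 2 + b * t + c = a * (t - y) * (t - y') := by
    rw [hb, hc]; ring
  have hpos : 0 < a * (t - y) * (t - y') :=
    mul_pos (mul_pos ha (sub_pos.mpr hyt)) (sub_pos.mpr hy't)
  linarith

namespace Saddle

variable (Z α : ℝ)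

noncomputable def phase (y : ℝ) : ℝ :=
  (1 + α) * log y + (1 - α) * log (1 - y) - (1 + α) * log (Z - y)

noncomputable def point : ℝ :=
  Z * (1 + α) / (Z + √(Z ^ 2 - Z * (1 - α ^ 2)))

variable {Z α}

theorem hasDerivAt_phase {y : ℝ} (hy : y ≠ 0) (hy1 : 1 - y ≠ 0) (hyZ : Z - y ≠ 0) :
    HasDerivAt (phase Z α)
      ((1 + α) / y - (1 - α) / (1 - y) + (1 + α) / (Z - y)) y := by
  have hlog1 : HasDerivAt (fun y => log (1 - y)) (-1 / (1 - y)) y := by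
    simpa using ((hasDerivAt_id y).const_sub 1).log hy1
  have hlogZ : HasDerivAt (fun y => log (Z - y)) (-1 / (Z - y)) y := by
    simpa using ((hasDerivAt_id y).const_sub Z).log hyZ
  exact ((((hasDerivAt_log hy).const_mul (1 + α)).add (hlog1.const_mul (1 - α))).sub
    (hlogZ.const_mul (1 + α))).congr_deriv (by ring)

theorem deriv_phase {y : ℝ} (hy0 : 0 < y) (hy1 : y < 1) (hyZ : y < Z) :
    deriv (phase Z α) y =
      ((1 - α) * y ^ 2 - 2 * Z * y + Z * (1 + α)) / (y * (1 - y) * (Z - y)) := by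
  rw [(hasDerivAt_phase hy0.ne' (sub_ne_zero.mpr hy1.ne') (sub_ne_zero.mpr hyZ.ne')).deriv]
  field_simp [(sub_pos.mpr hy1).ne', (sub_pos.mpr hyZ).ne']
  ring

theorem deriv_phase_eq_zero_iff {y : ℝ} (hy0 : 0 < y) (hy1 : y < 1) (hyZ : y < Z) :
    deriv (phase Z α) y = 0 ↔ (1 - α) * y ^ 2 - 2 * Z * y + Z * (1 + α) = 0 := by
  have hden : y * (1 - y) * (Z - y) ≠ 0 :=
    (mul_pos (mul_pos hy0 (sub_pos.mpr hy1)) (sub_pos.mpr hyZ)).ne'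
  rw [deriv_phase hy0 hy1 hyZ, div_eq_zero_iff, or_iff_left hden]

theorem point_mem_Ioo (hZ : 1 < Z) (hα : α ∈ Ioo (-1 : ℝ) 1) : point Z α ∈ Ioo 0 1 := by
  obtain ⟨hα₁, hα₂⟩ := hα
  have hs : Z * α < √(Z ^ 2 - Z * (1 - α ^ 2)) := by
    apply lt_sqrt_of_sq_lt
    nlinarith [mul_pos (mul_pos (by linarith : (0 : ℝ) < Z) (sub_pos.mpr hZ))
      (mul_pos (by linarith : (0 : ℝ) < 1 + α) (sub_pos.mpr hα₂))]
  have hden : 0 < Z + √(Z ^ 2 - Z * (1 - α ^ 2)) := by positivity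
  refine ⟨div_pos (by nlinarith) hden, (div_lt_one hden).mpr (by linarith)⟩

theorem point_isRoot (hZ : 1 ≤ Z) :
    (1 - α) * point Z α ^ 2 - 2 * Z * point Z α + Z * (1 + α) = 0 := by
  have hD : 0 ≤ Z ^ 2 - Z * (1 - α ^ 2) := by nlinarith
  have hs := sq_sqrt hD
  have hden : Z + √(Z ^ 2 - Z * (1 - α ^ 2)) ≠ 0 := by positivity
  unfold point
  generalize √(Z ^ 2 - Z * (1 - α ^ 2)) = s at hs hden ⊢
  field_simp
  linear_combination (Z * (1 + α)) * hs

theorem eq_point_of_isRoot (hZ : 1 < Z) (hα : α ∈ Ioo (-1 : ℝ) 1) {y : ℝ} (hy : y < 1)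
    (hq : (1 - α) * y ^ 2 - 2 * Z * y + Z * (1 + α) = 0) : y = point Z α :=
  eq_of_quadratic_eq_zero_of_lt (a := 1 - α) (b := -2 * Z) (c := Z * (1 + α)) (t := 1)
    (sub_pos.mpr hα.2) (by nlinarith [hα.2]) (by linear_combination hq)
    (by linear_combination point_isRoot hZ.le) hy (point_mem_Ioo hZ hα).2

end Saddle

open Saddle in
/-- for `Z > 1` and `α ∈ (-1,1)`, the point
`y₀ = Z(1+α)/(Z + √(Z² - Z(1-α²)))` lies in `(0,1)`, is a critical point of
`f(y) = (1+α) log y + (1-α) log(1-y) - (1+α) log(Z-y)`, and is the unique zero of `f'`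
in `(0,1)`. -/
theorem stmt_5 (Z α : ℝ) (hZ : 1 < Z) (hα : α ∈ Set.Ioo (-1 : ℝ) 1) :
    Z * (1 + α) / (Z + Real.sqrt (Z ^ 2 - Z * (1 - α ^ 2))) ∈ Set.Ioo (0 : ℝ) 1 ∧
    deriv (fun y : ℝ =>
        (1 + α) * Real.log y + (1 - α) * Real.log (1 - y) - (1 + α) * Real.log (Z - y))
      (Z * (1 + α) / (Z + Real.sqrt (Z ^ 2 - Z * (1 - α ^ 2)))) = 0 ∧
    ∀ y ∈ Set.Ioo (0 : ℝ) 1,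
      deriv (fun y : ℝ =>
          (1 + α) * Real.log y + (1 - α) * Real.log (1 - y) - (1 + α) * Real.log (Z - y))
        y = 0 →
      y = Z * (1 + α) / (Z + Real.sqrt (Z ^ 2 - Z * (1 - α ^ 2))) := by
  have hmem := point_mem_Ioo hZ hα
  refine ⟨hmem, ?_, fun y hy hdy => ?_⟩
  · exact (deriv_phase_eq_zero_iff hmem.1 hmem.2 (hmem.2.trans hZ)).mpr (point_isRoot hZ.le)
  · exact eq_point_of_isRoot hZ hα hy.2
      ((deriv_phase_eq_zero_iff hy.1 hy.2 (hy.2.trans hZ)).mp hdy)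
end
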